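/- arXiv:1904.00459 — 2 statements merged into one kernel-verified Lean document; each statement's English description precedes it below -/
import Mathlib

section
/- Let n ≥ 1, ε > 0, δ ≥ 0, b = e^{−ε}, q = 2δb/(1 − b + 2δb), and let N ~ Tulap(0, b, q) with cdf F_N. For any m ∈ ℝ, the function φ(x) = F_N(x − m) on {0,1,…,n} satisfies the four DP inequalities: φ(x) ≤ e^ε φ(x−1) + δ, φ(x−1) ≤ e^ε φ(x) + δ, 1 − φ(x) ≤ e^ε(1 − φ(x−1)) + δ, and 1 − φ(x−1) ≤ e^ε(1 − φ(x)) + δ, for all x ∈ {1,…,n}. -/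
/-!
The Tulap cdf is `F_N = T ∘ F₀` where `T u = clip((u - q/2)/(1 - q))` and `F₀` is the cdf of
`L + U`. Shifting the argument by one moves every atom of `DLap(b)` to a neighbour, whose mass is
at least `b` times as large, so `F₀ x ≤ e^ε F₀ (x - 1)`; together with monotonicity and the
symmetry `1 - F₀ x = F₀ (-x)` this gives all four ratio bounds for `F₀`. The choice of `q` makes
`e^ε q/2 - q/2 = δ(1 - q)`, which is exactly what turns `u ≤ e^ε v` into
`T u ≤ e^ε T v + δ`, and `1 - T u = T (1 - u)` handles the complements.
-/

open Real

noncomputable section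

def unitClip (a : ℝ) : ℝ := max 0 (min 1 a)

lemma unitClip_nonneg (a : ℝ) : 0 ≤ unitClip a := le_max_left _ _

lemma unitClip_le_one (a : ℝ) : unitClip a ≤ 1 := max_le zero_le_one (min_le_left _ _)

lemma unitClip_mono : Monotone unitClip := fun _ _ h => max_le_max le_rfl (min_le_min le_rfl h)

lemma one_sub_unitClip (a : ℝ) : 1 - unitClip a = unitClip (1 - a) := by
  unfold unitClip
  rcases le_total a 0 with h | h
  · rw [min_eq_right (by linarith), max_eq_left h, min_eq_left (by linarith),
      max_eq_right zero_le_one, sub_zero]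
  rcases le_total a 1 with h' | h'
  · rw [min_eq_right h', max_eq_right h, min_eq_right (by linarith), max_eq_right (by linarith)]
  · rw [min_eq_left h', max_eq_right zero_le_one, min_eq_right (by linarith),
      max_eq_left (by linarith), sub_self]

lemma unitClip_le_mul_add {E d a a' : ℝ} (hE : 1 ≤ E) (hd : 0 ≤ d) (h : a ≤ E * a' + d) :
    unitClip a ≤ E * unitClip a' + d := by
  rcases le_total 1 a' with h1 | h1
  · have ha' : unitClip a' = 1 := by rw [unitClip, min_eq_left h1, max_eq_right zero_le_one]
    nlinarith [unitClip_le_one a]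
  · have ha' : a' ≤ unitClip a' := by
      rw [unitClip, min_eq_right h1]; exact le_max_right _ _
    refine max_le (by nlinarith [unitClip_nonneg a']) ((min_le_right _ _).trans ?_)
    nlinarith

lemma hasSum_pow_natAbs {b : ℝ} (hb0 : 0 ≤ b) (hb1 : b < 1) :
    HasSum (fun l : ℤ => b ^ l.natAbs) ((1 + b) / (1 - b)) := by
  have hneg : (fun n : ℕ => b ^ (-((n : ℤ) + 1)).natAbs) = fun n : ℕ => b * b ^ n := by
    funext n
    rw [Int.natAbs_neg, show ((n : ℤ) + 1).natAbs = n + 1 from rfl, pow_succ, mul_comm]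
  have h := (hasSum_geometric_of_lt_one hb0 hb1).of_nat_of_neg_add_one
    (f := fun l : ℤ => b ^ l.natAbs) (by
      rw [hneg]; exact (hasSum_geometric_of_lt_one hb0 hb1).mul_left b)
  convert h using 1
  field_simp [(sub_pos.2 hb1).ne']

def discreteLaplacePmf (b : ℝ) (l : ℤ) : ℝ := (1 - b) / (1 + b) * b ^ l.natAbs

section DiscreteLaplace

variable {b : ℝ}

lemma discreteLaplacePmf_nonneg (hb0 : 0 ≤ b) (hb1 : b ≤ 1) (l : ℤ) :
    0 ≤ discreteLaplacePmf b l :=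
  mul_nonneg (div_nonneg (by linarith) (by linarith)) (pow_nonneg hb0 _)

lemma hasSum_discreteLaplacePmf (hb0 : 0 ≤ b) (hb1 : b < 1) : HasSum (discreteLaplacePmf b) 1 := by
  have hmass : (1 - b) / (1 + b) * ((1 + b) / (1 - b)) = 1 := by
    field_simp [(sub_pos.2 hb1).ne', (by linarith : 1 + b ≠ 0)]
  rw [← hmass]
  exact (hasSum_pow_natAbs hb0 hb1).mul_left _

lemma mul_discreteLaplacePmf_le_sub_one (hb0 : 0 ≤ b) (hb1 : b ≤ 1) (l : ℤ) :
    b * discreteLaplacePmf b l ≤ discreteLaplacePmf b (l - 1) := by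
  have hpow : b ^ (l.natAbs + 1) ≤ b ^ (l - 1).natAbs :=
    pow_le_pow_of_le_one hb0 hb1 (Int.natAbs_sub_le l 1)
  rw [pow_succ] at hpow
  unfold discreteLaplacePmf
  nlinarith [div_nonneg (by linarith : 0 ≤ 1 - b) (by linarith : 0 ≤ 1 + b)]

lemma summable_discreteLaplacePmf_mul (hb0 : 0 ≤ b) (hb1 : b < 1) {g : ℤ → ℝ}
    (hg0 : ∀ l, 0 ≤ g l) (hg1 : ∀ l, g l ≤ 1) :
    Summable fun l => discreteLaplacePmf b l * g l :=
  (hasSum_discreteLaplacePmf hb0 hb1).summable.of_nonneg_of_le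
    (fun l => mul_nonneg (discreteLaplacePmf_nonneg hb0 hb1.le l) (hg0 l))
    (fun l => mul_le_of_le_one_right (discreteLaplacePmf_nonneg hb0 hb1.le l) (hg1 l))

end DiscreteLaplace

/-- The cdf of `L + U`, `L ~ DLap(b)`, `U ~ Uniform(-1/2, 1/2)`. -/
def tulapBaseCdf (b x : ℝ) : ℝ := ∑' l : ℤ, discreteLaplacePmf b l * unitClip (x - l + 1 / 2)

section TulapBaseCdf

variable {b : ℝ}

lemma summable_tulapBaseCdf (hb0 : 0 ≤ b) (hb1 : b < 1) (x : ℝ) :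
    Summable fun l : ℤ => discreteLaplacePmf b l * unitClip (x - l + 1 / 2) :=
  summable_discreteLaplacePmf_mul hb0 hb1 (fun _ => unitClip_nonneg _) fun _ => unitClip_le_one _

lemma hasSum_tulapBaseCdf (hb0 : 0 ≤ b) (hb1 : b < 1) (x : ℝ) :
    HasSum (fun l : ℤ => discreteLaplacePmf b l * unitClip (x - l + 1 / 2)) (tulapBaseCdf b x) :=
  (summable_tulapBaseCdf hb0 hb1 x).hasSum

lemma tulapBaseCdf_nonneg (hb0 : 0 ≤ b) (hb1 : b ≤ 1) (x : ℝ) : 0 ≤ tulapBaseCdf b x :=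
  tsum_nonneg fun l => mul_nonneg (discreteLaplacePmf_nonneg hb0 hb1 l) (unitClip_nonneg _)

lemma tulapBaseCdf_mono (hb0 : 0 ≤ b) (hb1 : b < 1) : Monotone (tulapBaseCdf b) :=
  fun x y hxy => (summable_tulapBaseCdf hb0 hb1 x).tsum_le_tsum
    (fun l => mul_le_mul_of_nonneg_left (unitClip_mono (by linarith))
      (discreteLaplacePmf_nonneg hb0 hb1.le l))
    (summable_tulapBaseCdf hb0 hb1 y)

lemma one_sub_tulapBaseCdf (hb0 : 0 ≤ b) (hb1 : b < 1) (x : ℝ) :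
    1 - tulapBaseCdf b x = tulapBaseCdf b (-x) := by
  have hneg : HasSum (fun l : ℤ => discreteLaplacePmf b l * unitClip (1 - (x - l + 1 / 2)))
      (tulapBaseCdf b (-x)) := by
    rw [← (Equiv.neg ℤ).hasSum_iff]
    convert hasSum_tulapBaseCdf hb0 hb1 (-x) using 2 with l
    simp only [Function.comp_apply, Equiv.neg_apply, discreteLaplacePmf, Int.natAbs_neg,
      Int.cast_neg]
    ring_nf
  have hsum := (hasSum_tulapBaseCdf hb0 hb1 x).add hneg
  simp only [← mul_add, ← one_sub_unitClip, add_sub_cancel, mul_one] at hsum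
  linarith [hsum.unique (hasSum_discreteLaplacePmf hb0 hb1)]

lemma mul_tulapBaseCdf_le_sub_one (hb0 : 0 ≤ b) (hb1 : b < 1) (x : ℝ) :
    b * tulapBaseCdf b x ≤ tulapBaseCdf b (x - 1) := by
  have hshift : HasSum (fun l : ℤ => discreteLaplacePmf b (l - 1) * unitClip (x - l + 1 / 2))
      (tulapBaseCdf b (x - 1)) := by
    rw [← (Equiv.subRight (1 : ℤ)).symm.hasSum_iff]
    convert hasSum_tulapBaseCdf hb0 hb1 (x - 1) using 2 with l
    simp only [Function.comp_apply, Equiv.subRight_symm_apply, add_sub_cancel_right, Int.cast_add,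
      Int.cast_one]
    ring_nf
  rw [tulapBaseCdf, ← tsum_mul_left]
  refine ((summable_tulapBaseCdf hb0 hb1 x).mul_left b).tsum_le_tsum (fun l => ?_)
    hshift.summable |>.trans_eq hshift.tsum_eq
  rw [← mul_assoc]
  exact mul_le_mul_of_nonneg_right (mul_discreteLaplacePmf_le_sub_one hb0 hb1.le l)
    (unitClip_nonneg _)

end TulapBaseCdf

section PrivacyBounds

variable {ε : ℝ}

lemma tulapBaseCdf_le_exp_mul_sub_one (hε : 0 < ε) (x : ℝ) :
    tulapBaseCdf (exp (-ε)) x ≤ exp ε * tulapBaseCdf (exp (-ε)) (x - 1) := by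
  have hb1 : exp (-ε) < 1 := exp_lt_one_iff.2 (by linarith)
  calc tulapBaseCdf (exp (-ε)) x
      = exp ε * (exp (-ε) * tulapBaseCdf (exp (-ε)) x) := by
        rw [← mul_assoc, ← exp_add, add_neg_cancel, exp_zero, one_mul]
    _ ≤ exp ε * tulapBaseCdf (exp (-ε)) (x - 1) :=
        mul_le_mul_of_nonneg_left (mul_tulapBaseCdf_le_sub_one (exp_pos _).le hb1 x)
          (exp_pos _).le

lemma tulapBaseCdf_sub_one_le_exp_mul (hε : 0 < ε) (x : ℝ) :
    tulapBaseCdf (exp (-ε)) (x - 1) ≤ exp ε * tulapBaseCdf (exp (-ε)) x := by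
  have hb1 : exp (-ε) < 1 := exp_lt_one_iff.2 (by linarith)
  have hF0 := tulapBaseCdf_nonneg (exp_pos (-ε)).le hb1.le x
  have hmono := tulapBaseCdf_mono (exp_pos (-ε)).le hb1 (sub_le_self x zero_le_one)
  nlinarith [one_le_exp hε.le]

end PrivacyBounds

/-- The map `u ↦ clip((u - q/2)/(1 - q))` taking the cdf of `Tulap(0, b, 0)` to that of
`Tulap(0, b, q)`. -/
def tulapTrim (q u : ℝ) : ℝ := unitClip ((u - q / 2) / (1 - q))

section TulapTrim

variable {q : ℝ}

lemma one_sub_tulapTrim (hq : q ≠ 1) (u : ℝ) : 1 - tulapTrim q u = tulapTrim q (1 - u) := by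
  rw [tulapTrim, tulapTrim, one_sub_unitClip]
  congr 1
  field_simp [sub_ne_zero.2 hq.symm]
  ring

lemma tulapTrim_le_mul_add {E δ u v : ℝ} (hE : 1 ≤ E) (hδ : 0 ≤ δ) (h1q : 0 < 1 - q)
    (hqE : E * (q / 2) - q / 2 = δ * (1 - q)) (h : u ≤ E * v) :
    tulapTrim q u ≤ E * tulapTrim q v + δ := by
  refine unitClip_le_mul_add hE hδ ?_
  rw [div_le_iff₀ h1q]
  field_simp
  nlinarith

lemma tulapQ_lt_one {ε δ : ℝ} (hε : 0 < ε) (hδ : 0 ≤ δ)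
    (hq : q = 2 * δ * exp (-ε) / (1 - exp (-ε) + 2 * δ * exp (-ε))) : q < 1 := by
  have hb1 : exp (-ε) < 1 := exp_lt_one_iff.2 (by linarith)
  have hD : 0 < 1 - exp (-ε) + 2 * δ * exp (-ε) := by nlinarith [exp_pos (-ε)]
  rw [hq, div_lt_one hD]
  linarith

lemma tulapTrim_le_exp_mul_add {ε δ u v : ℝ} (hε : 0 < ε) (hδ : 0 ≤ δ)
    (hq : q = 2 * δ * exp (-ε) / (1 - exp (-ε) + 2 * δ * exp (-ε))) (h : u ≤ exp ε * v) :
    tulapTrim q u ≤ exp ε * tulapTrim q v + δ := by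
  have hD : 0 < 1 - exp (-ε) + 2 * δ * exp (-ε) := by
    nlinarith [exp_pos (-ε), exp_lt_one_iff.2 (by linarith : -ε < 0)]
  have hEb : exp ε * exp (-ε) = 1 := by rw [← exp_add, add_neg_cancel, exp_zero]
  refine tulapTrim_le_mul_add (one_le_exp hε.le) hδ (sub_pos.2 (tulapQ_lt_one hε hδ hq)) ?_ h
  rw [hq]
  field_simp
  linear_combination δ * hEb

end TulapTrim

theorem stmt_10_general (n : ℕ) (ε δ : ℝ) (hε : 0 < ε) (hδ : 0 ≤ δ)
    (m b q : ℝ) (hb : b = Real.exp (-ε)) (hq : q = 2 * δ * b / (1 - b + 2 * δ * b))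
    (F₀ FN : ℝ → ℝ)
    (hF₀ : ∀ x : ℝ, F₀ x = ∑' l : ℤ,
      ((1 - b) / (1 + b)) * b ^ l.natAbs * max 0 (min 1 (x - l + 1 / 2)))
    (hFN : ∀ x : ℝ, FN x = max 0 (min 1 ((F₀ x - q / 2) / (1 - q))))
    (φ : ℕ → ℝ) (hφ : ∀ x : ℕ, φ x = FN ((x : ℝ) - m)) :
    ∀ x : ℕ, 1 ≤ x → x ≤ n →
      φ x ≤ Real.exp ε * φ (x - 1) + δ ∧
      φ (x - 1) ≤ Real.exp ε * φ x + δ ∧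
      1 - φ x ≤ Real.exp ε * (1 - φ (x - 1)) + δ ∧
      1 - φ (x - 1) ≤ Real.exp ε * (1 - φ x) + δ := by
  subst hb
  have hb0 : 0 ≤ exp (-ε) := (exp_pos _).le
  have hb1 : exp (-ε) < 1 := exp_lt_one_iff.2 (by linarith)
  intro x hx _
  set F := tulapBaseCdf (exp (-ε))
  set y : ℝ := (x : ℝ) - m
  have hφx : φ x = tulapTrim q (F y) := by rw [hφ, hFN, hF₀]; rfl
  have hφx' : φ (x - 1) = tulapTrim q (F (y - 1)) := by
    rw [hφ, hFN, hF₀, Nat.cast_sub hx, Nat.cast_one, sub_right_comm]; rfl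
  have hdp {u v : ℝ} (h : u ≤ exp ε * v) : tulapTrim q u ≤ exp ε * tulapTrim q v + δ :=
    tulapTrim_le_exp_mul_add hε hδ hq h
  have hq1 := (tulapQ_lt_one hε hδ hq).ne
  rw [hφx, hφx', one_sub_tulapTrim hq1, one_sub_tulapTrim hq1, one_sub_tulapBaseCdf hb0 hb1,
    one_sub_tulapBaseCdf hb0 hb1, neg_sub y 1]
  refine ⟨hdp (tulapBaseCdf_le_exp_mul_sub_one hε y), hdp (tulapBaseCdf_sub_one_le_exp_mul hε y),
    hdp ?_, hdp ?_⟩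
  · simpa only [sub_sub_cancel_left] using tulapBaseCdf_sub_one_le_exp_mul hε (1 - y)
  · simpa only [sub_sub_cancel_left] using tulapBaseCdf_le_exp_mul_sub_one hε (1 - y)

theorem stmt_10 (n : ℕ) (hn : 1 ≤ n) (ε δ : ℝ) (hε : 0 < ε) (hδ : 0 ≤ δ)
    (m b q : ℝ) (hb : b = Real.exp (-ε)) (hq : q = 2 * δ * b / (1 - b + 2 * δ * b))
    (F₀ FN : ℝ → ℝ)
    (hF₀ : ∀ x : ℝ, F₀ x = ∑' l : ℤ,
      ((1 - b) / (1 + b)) * b ^ l.natAbs * max 0 (min 1 (x - l + 1 / 2)))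
    (hFN : ∀ x : ℝ, FN x = max 0 (min 1 ((F₀ x - q / 2) / (1 - q))))
    (φ : ℕ → ℝ) (hφ : ∀ x : ℕ, φ x = FN ((x : ℝ) - m)) :
    ∀ x : ℕ, 1 ≤ x → x ≤ n →
      φ x ≤ Real.exp ε * φ (x - 1) + δ ∧
      φ (x - 1) ≤ Real.exp ε * φ x + δ ∧
      1 - φ x ≤ Real.exp ε * (1 - φ (x - 1)) + δ ∧
      1 - φ (x - 1) ≤ Real.exp ε * (1 - φ x) + δ :=
  stmt_10_general n ε δ hε hδ m b q hb hq F₀ FN hF₀ hFN φ hφ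
end
end

section
/- Let X ~ Binom(n, θ₀) and N ~ Tulap(0, b, q) be independent, Z = X + N, and define p(θ₀, Z) = P_{X'~Binom(n,θ₀), N'~Tulap(0,b,q)}(X' + N' ≥ Z | Z). Then p(θ₀, Z) is uniformly distributed on [0,1]. Consequently, for X ~ Binom(n, θ) with θ ≤ θ₀, P(p(θ₀, X + N) ≤ α) ≤ α for all α ∈ [0,1]. -/
/-!
Let `F` be the cdf of `Z = X + N`. It is continuous, so the probability integral transform pushes
the law of `Z` forward by `F` to Lebesgue measure on `[0, 1]`; hence `p(θ₀, Z) = 1 - F(Z)` is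
uniform under `θ₀`. The same transform computes the Tulap cdf: the Tulap density is the density of
`G + U` (`G` discrete Laplace, `U` uniform on a unit interval) restricted to the quantile band
`q/2 ≤ F₀ ≤ 1 - q/2` and renormalised, and the transform turns that band into `[q/2, 1 - q/2]`.
For `θ ≤ θ₀` the binomial laws are stochastically ordered, so `F_θ ≥ F_θ₀`, and the event
`1 - F_θ₀(Z) ≤ α` is contained in `1 - F_θ(Z) ≤ α`, which has probability `α` under `θ`.
-/

open MeasureTheory Set Filter Topology ProbabilityTheory
open scoped ENNReal
open Finset (range)

namespace ProbabilityTheory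

lemma isProbabilityMeasure_of_measure_Iic {ν : Measure ℝ} {G : ℝ → ℝ}
    (hG : ∀ z, ν (Iic z) = ENNReal.ofReal (G z)) (htop : Tendsto G atTop (𝓝 1)) :
    IsProbabilityMeasure ν := by
  constructor
  have h := tendsto_measure_Iic_atTop ν
  simp_rw [hG] at h
  exact tendsto_nhds_unique h (by simpa using ENNReal.tendsto_ofReal htop)

lemma cdf_eq_of_measure_Iic {ν : Measure ℝ} {G : ℝ → ℝ}
    (hG : ∀ z, ν (Iic z) = ENNReal.ofReal (G z)) (hG0 : ∀ z, 0 ≤ G z)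
    (htop : Tendsto G atTop (𝓝 1)) : cdf ν = G := by
  have := isProbabilityMeasure_of_measure_Iic hG htop
  funext z
  rw [cdf_eq_real, measureReal_def, hG, ENNReal.toReal_ofReal (hG0 z)]

variable {μ : Measure ℝ} [IsProbabilityMeasure μ]

lemma measure_cdf_preimage_Iic (hc : Continuous (cdf μ)) {x : ℝ} (hx0 : 0 ≤ x) (hx1 : x < 1) :
    μ (cdf μ ⁻¹' Iic x) = ENNReal.ofReal x := by
  set S := cdf μ ⁻¹' Iic x
  rcases S.eq_empty_or_nonempty with hS | hS
  · have hx : x ≤ 0 := ge_of_tendsto (tendsto_cdf_atBot μ)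
      (Eventually.of_forall fun z => le_of_lt (not_le.1 fun h => hS.subset h))
    rw [hS, measure_empty, le_antisymm hx hx0, ENNReal.ofReal_zero]
  obtain ⟨N, hN⟩ := eventually_atTop.1 ((tendsto_cdf_atTop μ).eventually_const_lt hx1)
  have hbdd : BddAbove S := ⟨N, fun z hz => le_of_not_ge fun h => (hN z h).not_ge hz⟩
  set u := sSup S
  have hu : u ∈ S := (isClosed_le hc continuous_const).csSup_mem hS hbdd
  have hSu : S = Iic u :=
    Subset.antisymm (fun z hz => le_csSup hbdd hz) fun z hz => (monotone_cdf μ hz).trans hu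
  have hxu : x ≤ cdf μ u := ge_of_tendsto (hc.continuousWithinAt (s := Ioi u)) <|
    eventually_nhdsWithin_of_forall fun z hz => le_of_lt <| not_le.1 fun h =>
      (not_le.2 hz) (le_csSup hbdd h)
  rw [hSu, ← ofReal_cdf, le_antisymm hu hxu]

theorem map_cdf_of_continuous (hc : Continuous (cdf μ)) :
    μ.map (cdf μ) = volume.restrict (Icc 0 1) := by
  refine Measure.ext_of_Iic _ _ fun x => ?_
  rw [Measure.map_apply (monotone_cdf μ).measurable measurableSet_Iic,
    Measure.restrict_apply measurableSet_Iic]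
  rcases lt_or_ge x 0 with hx0 | hx0
  · have h1 : cdf μ ⁻¹' Iic x = ∅ :=
      eq_empty_of_forall_notMem fun z hz => (hx0.trans_le (cdf_nonneg μ z)).not_ge hz
    have h2 : Iic x ∩ Icc 0 1 = ∅ :=
      eq_empty_of_forall_notMem fun z hz => (hx0.trans_le hz.2.1).not_ge hz.1
    rw [h1, h2, measure_empty, measure_empty]
  rcases lt_or_ge x 1 with hx1 | hx1
  · rw [measure_cdf_preimage_Iic hc hx0 hx1, inter_comm, ← Ici_inter_Iic, inter_assoc,
      Iic_inter_Iic, Ici_inter_Iic, min_eq_right hx1.le, Real.volume_Icc, sub_zero]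
  · have h1 : cdf μ ⁻¹' Iic x = univ :=
      eq_univ_of_forall fun z => (cdf_le_one μ z).trans hx1
    rw [h1, measure_univ, inter_eq_right.2 fun z hz => hz.2.trans hx1, Real.volume_Icc, sub_zero,
      ENNReal.ofReal_one]

lemma measure_cdf_preimage (hc : Continuous (cdf μ)) {s : Set ℝ} (hs : MeasurableSet s) :
    μ (cdf μ ⁻¹' s) = volume (s ∩ Icc 0 1) := by
  rw [← Measure.map_apply (monotone_cdf μ).measurable hs, map_cdf_of_continuous hc,
    Measure.restrict_apply hs]

lemma measureReal_setOf_le_cdf (hc : Continuous (cdf μ)) {β : ℝ} (hβ0 : 0 ≤ β) (hβ1 : β ≤ 1) :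
    μ.real {z | β ≤ cdf μ z} = 1 - β := by
  rw [measureReal_def, show {z | β ≤ cdf μ z} = cdf μ ⁻¹' Ici β from rfl,
    measure_cdf_preimage hc measurableSet_Ici, ← Ici_inter_Iic, ← inter_assoc, Ici_inter_Ici,
    Ici_inter_Iic, max_eq_left hβ0, Real.volume_Icc, ENNReal.toReal_ofReal (by linarith)]

lemma Iic_ae_eq_cdf_preimage (hc : Continuous (cdf μ)) (y : ℝ) :
    Iic y =ᵐ[μ] cdf μ ⁻¹' Iic (cdf μ y) := by
  refine ae_eq_of_subset_of_measure_ge (fun z hz => monotone_cdf μ hz) ?_ nullMeasurableSet_Iic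
    (measure_ne_top _ _)
  rw [measure_cdf_preimage hc measurableSet_Iic, inter_comm, ← Ici_inter_Iic, inter_assoc,
    Iic_inter_Iic, Ici_inter_Iic, min_eq_right (cdf_le_one μ y), Real.volume_Icc, sub_zero,
    ofReal_cdf]

lemma measure_cdf_preimage_Icc_inter_Iic (hc : Continuous (cdf μ)) {α β : ℝ} (hα : 0 ≤ α)
    (hβ : β ≤ 1) (y : ℝ) :
    μ (cdf μ ⁻¹' Icc α β ∩ Iic y) = ENNReal.ofReal (min β (cdf μ y) - α) := by
  have hset : Icc α β ∩ Iic (cdf μ y) ∩ Icc 0 1 = Icc α (min β (cdf μ y)) := by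
    ext z
    simp only [mem_inter_iff, mem_Icc, mem_Iic, le_min_iff]
    constructor
    · rintro ⟨⟨⟨h1, h2⟩, h3⟩, -⟩
      exact ⟨h1, h2, h3⟩
    · rintro ⟨h1, h2, h3⟩
      exact ⟨⟨⟨h1, h2⟩, h3⟩, hα.trans h1, h2.trans hβ⟩
  rw [measure_congr ((ae_eq_refl _).inter (Iic_ae_eq_cdf_preimage hc y)), ← preimage_inter,
    measure_cdf_preimage hc (measurableSet_Icc.inter measurableSet_Iic), hset, Real.volume_Icc]

end ProbabilityTheory

namespace Tulap

variable {b q : ℝ}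

-- `unifDLapMeasure b` is the law of `G + U`, with `G` discrete Laplace of parameter `b` on `ℤ`
-- and `U` uniform on `[-1/2, 1/2]`; its density is constant on the cells `round ⁻¹' {l}`.
noncomputable def dlapWeight (b : ℝ) (l : ℤ) : ℝ := (1 - b) / (1 + b) * b ^ l.natAbs

noncomputable def unifDLapDensity (b t : ℝ) : ℝ := dlapWeight b (round t)

noncomputable def unifDLapCdf (b x : ℝ) : ℝ :=
  ∑' l : ℤ, dlapWeight b l * max 0 (min 1 (x - l + 1 / 2))

noncomputable def unifDLapMeasure (b : ℝ) : Measure ℝ :=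
  volume.withDensity fun t => ENNReal.ofReal (unifDLapDensity b t)

lemma hasSum_pow_natAbs (hb0 : 0 ≤ b) (hb1 : b < 1) :
    HasSum (fun l : ℤ => b ^ l.natAbs) ((1 + b) / (1 - b)) := by
  have hpos : HasSum (fun n : ℕ => b ^ (n : ℤ).natAbs) (1 - b)⁻¹ := by
    simpa only [Int.natAbs_natCast] using hasSum_geometric_of_lt_one hb0 hb1
  have hneg : HasSum (fun n : ℕ => b ^ (-((n : ℤ) + 1)).natAbs) (b * (1 - b)⁻¹) := by
    have he (n : ℕ) : b ^ (-((n : ℤ) + 1)).natAbs = b * b ^ n := by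
      rw [show (-((n : ℤ) + 1)).natAbs = n + 1 by omega, pow_succ']
    simpa only [he] using (hasSum_geometric_of_lt_one hb0 hb1).mul_left b
  convert HasSum.of_nat_of_neg_add_one (f := fun l : ℤ => b ^ l.natAbs) hpos hneg using 1
  field_simp [show (1 : ℝ) - b ≠ 0 by linarith]

lemma dlapWeight_nonneg (hb0 : 0 ≤ b) (hb1 : b < 1) (l : ℤ) : 0 ≤ dlapWeight b l :=
  mul_nonneg (div_nonneg (by linarith) (by linarith)) (pow_nonneg hb0 _)

lemma hasSum_dlapWeight (hb0 : 0 ≤ b) (hb1 : b < 1) : HasSum (dlapWeight b) 1 := by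
  have h := (hasSum_pow_natAbs hb0 hb1).mul_left ((1 - b) / (1 + b))
  have h1 : 1 - b ≠ 0 := ne_of_gt (by linarith)
  have h2 : 1 + b ≠ 0 := ne_of_gt (by linarith)
  rwa [div_mul_div_comm, mul_comm (1 - b), div_self (mul_ne_zero h2 h1)] at h

lemma summable_dlapWeight_mul_clamp (hb0 : 0 ≤ b) (hb1 : b < 1) (g : ℤ → ℝ) :
    Summable fun l => dlapWeight b l * max 0 (min 1 (g l)) :=
  (hasSum_dlapWeight hb0 hb1).summable.of_nonneg_of_le
    (fun l => mul_nonneg (dlapWeight_nonneg hb0 hb1 l) (le_max_left _ _))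
    (fun l => mul_le_of_le_one_right (dlapWeight_nonneg hb0 hb1 l)
      (max_le zero_le_one (min_le_left _ _)))

lemma unifDLapCdf_nonneg (hb0 : 0 ≤ b) (hb1 : b < 1) (x : ℝ) : 0 ≤ unifDLapCdf b x :=
  tsum_nonneg fun l => mul_nonneg (dlapWeight_nonneg hb0 hb1 l) (le_max_left _ _)

lemma preimage_round_singleton (l : ℤ) : round ⁻¹' {l} = Ico (l - 1 / 2 : ℝ) (l + 1 / 2) :=
  Set.ext fun _ => round_eq_iff

lemma lintegral_comp_round (g : ℤ → ℝ≥0∞) {s : Set ℝ} (hs : MeasurableSet s) :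
    ∫⁻ t in s, g (round t) =
      ∑' l : ℤ, g l * volume (s ∩ Ico (l - 1 / 2 : ℝ) (l + 1 / 2)) := by
  simp_rw [← preimage_round_singleton]
  have hmeas (l : ℤ) : MeasurableSet (s ∩ round ⁻¹' {l}) := by
    rw [preimage_round_singleton]
    exact hs.inter measurableSet_Ico
  have hdisj : Pairwise (Function.onFun Disjoint fun l : ℤ => s ∩ round ⁻¹' {l}) :=
    fun l l' h => ((disjoint_singleton.2 h).preimage round).mono inter_subset_right
      inter_subset_right
  have hcover : ⋃ l : ℤ, s ∩ round ⁻¹' {l} = s := by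
    rw [← inter_iUnion, ← preimage_iUnion, iUnion_of_singleton, preimage_univ, inter_univ]
  conv_lhs => rw [← hcover]
  rw [lintegral_iUnion hmeas hdisj]
  refine tsum_congr fun l => ?_
  rw [setLIntegral_congr_fun (hmeas l) fun t ht => congrArg g ht.2, setLIntegral_const]

lemma volume_Iic_inter_Ico (y a c : ℝ) :
    volume (Iic y ∩ Ico a c) = ENNReal.ofReal (min y c - a) := by
  apply le_antisymm
  · calc volume (Iic y ∩ Ico a c) ≤ volume (Icc a (min y c)) :=
          measure_mono fun t ht => ⟨ht.2.1, le_min ht.1 ht.2.2.le⟩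
      _ = _ := Real.volume_Icc
  · calc ENNReal.ofReal (min y c - a) = volume (Ico a (min y c)) := Real.volume_Ico.symm
      _ ≤ volume (Iic y ∩ Ico a c) := measure_mono fun t ht =>
          ⟨(ht.2.trans_le (min_le_left _ _)).le, ht.1, ht.2.trans_le (min_le_right _ _)⟩

lemma unifDLapMeasure_apply {s : Set ℝ} (hs : MeasurableSet s) :
    unifDLapMeasure b s =
      ∑' l : ℤ, ENNReal.ofReal (dlapWeight b l) *
        volume (s ∩ Ico (l - 1 / 2 : ℝ) (l + 1 / 2)) := by
  rw [unifDLapMeasure, withDensity_apply _ hs]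
  exact lintegral_comp_round (fun l => ENNReal.ofReal (dlapWeight b l)) hs

lemma isProbabilityMeasure_unifDLapMeasure (hb0 : 0 ≤ b) (hb1 : b < 1) :
    IsProbabilityMeasure (unifDLapMeasure b) := by
  constructor
  have hvol (l : ℤ) : volume (univ ∩ Ico (l - 1 / 2 : ℝ) (l + 1 / 2)) = 1 := by
    rw [univ_inter, Real.volume_Ico, add_sub_sub_cancel, add_halves, ENNReal.ofReal_one]
  simp_rw [unifDLapMeasure_apply MeasurableSet.univ, hvol, mul_one]
  rw [← ENNReal.ofReal_tsum_of_nonneg (dlapWeight_nonneg hb0 hb1)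
    (hasSum_dlapWeight hb0 hb1).summable, (hasSum_dlapWeight hb0 hb1).tsum_eq, ENNReal.ofReal_one]

lemma unifDLapMeasure_Iic (hb0 : 0 ≤ b) (hb1 : b < 1) (y : ℝ) :
    unifDLapMeasure b (Iic y) = ENNReal.ofReal (unifDLapCdf b y) := by
  have hvol (l : ℤ) : volume (Iic y ∩ Ico (l - 1 / 2 : ℝ) (l + 1 / 2)) =
      ENNReal.ofReal (max 0 (min 1 (y - l + 1 / 2))) := by
    rw [volume_Iic_inter_Ico, ENNReal.ofReal_max, ENNReal.ofReal_zero, zero_max,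
      ← min_sub_sub_right, min_comm]
    ring_nf
  rw [unifDLapMeasure_apply measurableSet_Iic, unifDLapCdf,
    ENNReal.ofReal_tsum_of_nonneg
      (fun l => mul_nonneg (dlapWeight_nonneg hb0 hb1 l) (le_max_left _ _))
      (summable_dlapWeight_mul_clamp hb0 hb1 _)]
  exact tsum_congr fun l => by rw [hvol, ENNReal.ofReal_mul (dlapWeight_nonneg hb0 hb1 l)]

lemma cdf_unifDLapMeasure (hb0 : 0 ≤ b) (hb1 : b < 1) :
    cdf (unifDLapMeasure b) = unifDLapCdf b := by
  have := isProbabilityMeasure_unifDLapMeasure hb0 hb1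
  funext y
  rw [cdf_eq_real, measureReal_def, unifDLapMeasure_Iic hb0 hb1, ENNReal.toReal_ofReal
    (unifDLapCdf_nonneg hb0 hb1 y)]

lemma continuous_unifDLapCdf (hb0 : 0 ≤ b) (hb1 : b < 1) : Continuous (unifDLapCdf b) := by
  refine continuous_tsum (fun l => by fun_prop) (hasSum_dlapWeight hb0 hb1).summable
    fun l x => ?_
  rw [Real.norm_of_nonneg (mul_nonneg (dlapWeight_nonneg hb0 hb1 l) (le_max_left _ _))]
  exact mul_le_of_le_one_right (dlapWeight_nonneg hb0 hb1 l)
    (max_le zero_le_one (min_le_left _ _))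

noncomputable def tulapDensity (b q t : ℝ) : ℝ :=
  if q / 2 ≤ unifDLapCdf b t ∧ unifDLapCdf b t ≤ 1 - q / 2 then unifDLapDensity b t / (1 - q)
  else 0

noncomputable def tulapCdf (b q x : ℝ) : ℝ := max 0 (min 1 ((unifDLapCdf b x - q / 2) / (1 - q)))

lemma ofReal_tulapDensity (hq1 : q < 1) (t : ℝ) :
    ENNReal.ofReal (tulapDensity b q t) = (unifDLapCdf b ⁻¹' Icc (q / 2) (1 - q / 2)).indicator
      (fun t => ENNReal.ofReal (unifDLapDensity b t) * ENNReal.ofReal (1 - q)⁻¹) t := by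
  by_cases ht : t ∈ unifDLapCdf b ⁻¹' Icc (q / 2) (1 - q / 2)
  · rw [indicator_of_mem ht, tulapDensity, if_pos (show _ ∧ _ from ht), div_eq_mul_inv,
      ENNReal.ofReal_mul' (inv_nonneg.2 (by linarith))]
  · rw [indicator_of_notMem ht, tulapDensity, if_neg (show ¬(_ ∧ _) from ht),
      ENNReal.ofReal_zero]

lemma lintegral_Iic_tulapDensity (hb0 : 0 ≤ b) (hb1 : b < 1) (hq0 : 0 ≤ q) (hq1 : q < 1)
    (y : ℝ) :
    ∫⁻ t in Iic y, ENNReal.ofReal (tulapDensity b q t) = ENNReal.ofReal (tulapCdf b q y) := by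
  have := isProbabilityMeasure_unifDLapMeasure hb0 hb1
  have hF := cdf_unifDLapMeasure hb0 hb1
  have hcont : Continuous (cdf (unifDLapMeasure b)) := hF ▸ continuous_unifDLapCdf hb0 hb1
  have hA : MeasurableSet (unifDLapCdf b ⁻¹' Icc (q / 2) (1 - q / 2)) :=
    (continuous_unifDLapCdf hb0 hb1).measurable measurableSet_Icc
  simp_rw [ofReal_tulapDensity hq1]
  rw [setLIntegral_indicator hA, lintegral_mul_const' _ _ ENNReal.ofReal_ne_top,
    ← withDensity_apply _ (hA.inter measurableSet_Iic)]
  change unifDLapMeasure b _ * _ = _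
  rw [← hF, measure_cdf_preimage_Icc_inter_Iic hcont (by linarith) (by linarith),
    ← ENNReal.ofReal_mul' (inv_nonneg.2 (by linarith)), tulapCdf, ENNReal.ofReal_max,
    ENNReal.ofReal_zero, zero_max, ← div_eq_mul_inv, ← min_sub_sub_right,
    ← min_div_div_right (by linarith), show 1 - q / 2 - q / 2 = 1 - q by ring,
    div_self (sub_pos.2 hq1).ne', hF]

lemma tulapCdf_nonneg (x : ℝ) : 0 ≤ tulapCdf b q x := le_max_left _ _

lemma continuous_tulapCdf (hb0 : 0 ≤ b) (hb1 : b < 1) : Continuous (tulapCdf b q) := by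
  have := continuous_unifDLapCdf hb0 hb1
  unfold tulapCdf
  fun_prop

lemma monotone_tulapCdf (hb0 : 0 ≤ b) (hb1 : b < 1) (hq1 : q < 1) : Monotone (tulapCdf b q) :=
  fun _ _ h => max_le_max le_rfl <| min_le_min le_rfl <| div_le_div_of_nonneg_right
    (sub_le_sub_right (cdf_unifDLapMeasure hb0 hb1 ▸ monotone_cdf _ h) _) (by linarith)

lemma tendsto_tulapCdf_atTop (hb0 : 0 ≤ b) (hb1 : b < 1) (hq0 : 0 ≤ q) (hq1 : q < 1) :
    Tendsto (tulapCdf b q) atTop (𝓝 1) := by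
  have hlim : max 0 (min 1 ((1 - q / 2) / (1 - q))) = 1 := by
    rw [min_eq_left ((one_le_div (by linarith)).2 (by linarith)), max_eq_right zero_le_one]
  rw [← hlim]
  have h := tendsto_cdf_atTop (unifDLapMeasure b)
  rw [cdf_unifDLapMeasure hb0 hb1] at h
  exact ((continuous_const.max (continuous_const.min
    ((continuous_id.sub continuous_const).div_const _))).tendsto 1).comp h

lemma measurable_tulapDensity (hb0 : 0 ≤ b) (hb1 : b < 1) : Measurable (tulapDensity b q) := by
  have hround : Measurable (round : ℝ → ℤ) := by
    simp_rw [funext (round_eq (α := ℝ))]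
    exact Int.measurable_floor.comp (measurable_add_const _)
  exact Measurable.ite ((continuous_unifDLapCdf hb0 hb1).measurable measurableSet_Icc)
    (((measurable_of_countable (dlapWeight b)).comp hround).div_const _) measurable_const

lemma tulapDensity_nonneg (hb0 : 0 ≤ b) (hb1 : b < 1) (hq1 : q < 1) (t : ℝ) :
    0 ≤ tulapDensity b q t := by
  unfold tulapDensity
  split_ifs
  · exact div_nonneg (dlapWeight_nonneg hb0 hb1 _) (by linarith)
  · exact le_rfl

lemma lintegral_Iic_comp_sub {f : ℝ → ℝ≥0∞} (x z : ℝ) :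
    ∫⁻ t in Iic z, f (t - x) = ∫⁻ t in Iic (z - x), f t := by
  have h := (measurePreserving_sub_right volume x).setLIntegral_comp_preimage_emb
    (measurableEmbedding_subRight x) f (Iic (z - x))
  rwa [preimage_sub_const_Iic, sub_add_cancel] at h

variable {n : ℕ} {θ : ℝ}

section Binomial

open Finset

noncomputable def binomWeight (n : ℕ) (θ : ℝ) (k : ℕ) : ℝ :=
  n.choose k * θ ^ k * (1 - θ) ^ (n - k)

lemma binomWeight_nonneg (h0 : 0 ≤ θ) (h1 : θ ≤ 1) (k : ℕ) : 0 ≤ binomWeight n θ k :=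
  mul_nonneg (mul_nonneg (Nat.cast_nonneg _) (pow_nonneg h0 _)) (pow_nonneg (by linarith) _)

lemma sum_binomWeight (n : ℕ) (θ : ℝ) : ∑ k ∈ range (n + 1), binomWeight n θ k = 1 := by
  have h := add_pow θ (1 - θ) n
  rw [add_sub_cancel, one_pow] at h
  exact (sum_congr rfl fun k _ => by rw [binomWeight]; ring).trans h.symm

lemma binomWeight_succ_succ (θ : ℝ) {k : ℕ} (hk : k ≤ n) :
    binomWeight (n + 1) θ (k + 1) = θ * binomWeight n θ k + (1 - θ) * binomWeight n θ (k + 1) := by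
  rw [binomWeight, binomWeight, binomWeight, Nat.choose_succ_succ', Nat.succ_sub_succ]
  rcases hk.eq_or_lt with rfl | hk
  · rw [Nat.choose_succ_self]
    push_cast
    ring
  · rw [show n - k = n - (k + 1) + 1 by omega]
    push_cast
    ring

lemma sum_binomWeight_succ_mul (θ : ℝ) (g : ℕ → ℝ) :
    ∑ k ∈ range (n + 2), binomWeight (n + 1) θ k * g k =
      (1 - θ) * ∑ k ∈ range (n + 1), binomWeight n θ k * g k +
        θ * ∑ k ∈ range (n + 1), binomWeight n θ k * g (k + 1) := by
  have h0 : binomWeight (n + 1) θ 0 = (1 - θ) * binomWeight n θ 0 := by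
    simp [binomWeight, pow_succ, mul_comm]
  have htop : binomWeight n θ (n + 1) = 0 := by simp [binomWeight]
  rw [sum_range_succ', sum_congr rfl fun k hk => by
      rw [binomWeight_succ_succ θ (Nat.lt_succ_iff.1 (mem_range.1 hk))],
    h0, sum_range_succ' (fun k => binomWeight n θ k * g k)]
  simp only [add_mul, sum_add_distrib, mul_assoc, ← mul_sum]
  rw [sum_range_succ (fun k => binomWeight n θ (k + 1) * g (k + 1)), htop]
  ring

lemma antitoneOn_sum_binomWeight_mul {g : ℕ → ℝ} (hg : ∀ k, g (k + 1) ≤ g k) :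
    AntitoneOn (fun θ => ∑ k ∈ range (n + 1), binomWeight n θ k * g k) (Set.Icc 0 1) := by
  induction n generalizing g with
  | zero => intro θ _ θ' _ _; simp [binomWeight]
  | succ n ih =>
    intro θ hθ θ' hθ' hle
    simp only [sum_binomWeight_succ_mul]
    have hshift : ∑ k ∈ range (n + 1), binomWeight n θ' k * g (k + 1) ≤
        ∑ k ∈ range (n + 1), binomWeight n θ' k * g k :=
      sum_le_sum fun k _ => mul_le_mul_of_nonneg_left (hg k) (binomWeight_nonneg hθ'.1 hθ'.2 k)
    calc _ ≤ (1 - θ) * ∑ k ∈ range (n + 1), binomWeight n θ' k * g k +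
          θ * ∑ k ∈ range (n + 1), binomWeight n θ' k * g (k + 1) := by
          linarith [mul_le_mul_of_nonneg_right hle (sub_nonneg.2 hshift)]
      _ ≤ _ := add_le_add (mul_le_mul_of_nonneg_left (ih hg hθ hθ' hle) (by linarith [hθ.2]))
          (mul_le_mul_of_nonneg_left (ih (fun k => hg (k + 1)) hθ hθ' hle) hθ.1)

end Binomial

noncomputable def binomTulapDensity (n : ℕ) (b q θ z : ℝ) : ℝ :=
  ∑ x ∈ range (n + 1), binomWeight n θ x * tulapDensity b q (z - x)

noncomputable def binomTulapCdf (n : ℕ) (b q θ z : ℝ) : ℝ :=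
  ∑ x ∈ range (n + 1), binomWeight n θ x * tulapCdf b q (z - x)

noncomputable def binomTulapMeasure (n : ℕ) (b q θ : ℝ) : Measure ℝ :=
  volume.withDensity fun z => ENNReal.ofReal (binomTulapDensity n b q θ z)

noncomputable def pValue (n : ℕ) (b q θ₀ z : ℝ) : ℝ := 1 - binomTulapCdf n b q θ₀ z

lemma binomTulapMeasure_Iic (hb0 : 0 ≤ b) (hb1 : b < 1) (hq0 : 0 ≤ q) (hq1 : q < 1)
    (hθ : θ ∈ Icc 0 1) (z : ℝ) :
    binomTulapMeasure n b q θ (Iic z) = ENNReal.ofReal (binomTulapCdf n b q θ z) := by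
  have hw := binomWeight_nonneg (n := n) hθ.1 hθ.2
  have hdens (t : ℝ) : ENNReal.ofReal (binomTulapDensity n b q θ t) =
      ∑ x ∈ range (n + 1), ENNReal.ofReal (binomWeight n θ x) *
        ENNReal.ofReal (tulapDensity b q (t - x)) := by
    rw [binomTulapDensity, ENNReal.ofReal_sum_of_nonneg fun x _ =>
      mul_nonneg (hw x) (tulapDensity_nonneg hb0 hb1 hq1 _)]
    exact Finset.sum_congr rfl fun x _ => ENNReal.ofReal_mul (hw x)
  rw [binomTulapMeasure, withDensity_apply _ measurableSet_Iic, binomTulapCdf,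
    ENNReal.ofReal_sum_of_nonneg fun x _ => mul_nonneg (hw x) (tulapCdf_nonneg _)]
  simp_rw [hdens]
  have hm := measurable_tulapDensity (q := q) hb0 hb1
  rw [lintegral_finsetSum _ fun x _ => by fun_prop]
  refine Finset.sum_congr rfl fun x _ => ?_
  rw [lintegral_const_mul' _ _ ENNReal.ofReal_ne_top,
    lintegral_Iic_comp_sub (f := fun t => ENNReal.ofReal (tulapDensity b q t)),
    lintegral_Iic_tulapDensity hb0 hb1 hq0 hq1, ENNReal.ofReal_mul (hw x)]

lemma tendsto_binomTulapCdf_atTop (hb0 : 0 ≤ b) (hb1 : b < 1) (hq0 : 0 ≤ q) (hq1 : q < 1) :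
    Tendsto (binomTulapCdf n b q θ) atTop (𝓝 1) := by
  rw [← sum_binomWeight n θ]
  refine tendsto_finsetSum _ fun x _ => ?_
  simpa [sub_eq_add_neg] using ((tendsto_tulapCdf_atTop hb0 hb1 hq0 hq1).comp
    (tendsto_atTop_add_const_right atTop (-(x : ℝ)) tendsto_id)).const_mul (binomWeight n θ x)

lemma isProbabilityMeasure_binomTulapMeasure (hb0 : 0 ≤ b) (hb1 : b < 1) (hq0 : 0 ≤ q)
    (hq1 : q < 1) (hθ : θ ∈ Icc 0 1) : IsProbabilityMeasure (binomTulapMeasure n b q θ) :=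
  isProbabilityMeasure_of_measure_Iic (binomTulapMeasure_Iic hb0 hb1 hq0 hq1 hθ)
    (tendsto_binomTulapCdf_atTop hb0 hb1 hq0 hq1)

lemma cdf_binomTulapMeasure (hb0 : 0 ≤ b) (hb1 : b < 1) (hq0 : 0 ≤ q) (hq1 : q < 1)
    (hθ : θ ∈ Icc 0 1) :
    cdf (binomTulapMeasure n b q θ) = binomTulapCdf n b q θ :=
  cdf_eq_of_measure_Iic (binomTulapMeasure_Iic hb0 hb1 hq0 hq1 hθ)
    (fun _ => Finset.sum_nonneg fun x _ =>
      mul_nonneg (binomWeight_nonneg hθ.1 hθ.2 x) (tulapCdf_nonneg _))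
    (tendsto_binomTulapCdf_atTop hb0 hb1 hq0 hq1)

lemma continuous_binomTulapCdf (hb0 : 0 ≤ b) (hb1 : b < 1) :
    Continuous (binomTulapCdf n b q θ) :=
  continuous_finsetSum _ fun _ _ =>
    continuous_const.mul ((continuous_tulapCdf hb0 hb1).comp (continuous_sub_right _))

lemma antitoneOn_binomTulapCdf (hb0 : 0 ≤ b) (hb1 : b < 1) (hq1 : q < 1) (z : ℝ) :
    AntitoneOn (fun θ => binomTulapCdf n b q θ z) (Icc 0 1) :=
  antitoneOn_sum_binomWeight_mul fun k =>
    monotone_tulapCdf hb0 hb1 hq1 (by push_cast; linarith)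

lemma measureReal_pValue_le (hb0 : 0 ≤ b) (hb1 : b < 1) (hq0 : 0 ≤ q) (hq1 : q < 1)
    (hθ : θ ∈ Icc 0 1) {α : ℝ} (hα0 : 0 ≤ α) (hα1 : α ≤ 1) :
    (binomTulapMeasure n b q θ).real {z | pValue n b q θ z ≤ α} = α := by
  have := isProbabilityMeasure_binomTulapMeasure (n := n) hb0 hb1 hq0 hq1 hθ
  have hF := cdf_binomTulapMeasure (n := n) hb0 hb1 hq0 hq1 hθ
  have hset : {z | pValue n b q θ z ≤ α} = {z | 1 - α ≤ cdf (binomTulapMeasure n b q θ) z} := by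
    rw [hF]
    exact Set.ext fun z => (sub_le_comm : 1 - binomTulapCdf n b q θ z ≤ α ↔ _)
  rw [hset, measureReal_setOf_le_cdf (hF ▸ continuous_binomTulapCdf hb0 hb1) (by linarith)
    (by linarith), sub_sub_cancel]

lemma measureReal_pValue_le_of_le (hb0 : 0 ≤ b) (hb1 : b < 1) (hq0 : 0 ≤ q) (hq1 : q < 1)
    {θ₀ : ℝ} (hθ0 : 0 ≤ θ) (hθθ₀ : θ ≤ θ₀) (hθ₀1 : θ₀ ≤ 1) {α : ℝ} (hα0 : 0 ≤ α) (hα1 : α ≤ 1) :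
    (binomTulapMeasure n b q θ).real {z | pValue n b q θ₀ z ≤ α} ≤ α := by
  have hθ : θ ∈ Icc 0 1 := ⟨hθ0, hθθ₀.trans hθ₀1⟩
  have := isProbabilityMeasure_binomTulapMeasure (n := n) hb0 hb1 hq0 hq1 hθ
  calc _ ≤ (binomTulapMeasure n b q θ).real {z | pValue n b q θ z ≤ α} :=
        measureReal_mono fun z hz => (sub_le_sub_left (antitoneOn_binomTulapCdf hb0 hb1 hq1 z hθ
          ⟨hθ0.trans hθθ₀, hθ₀1⟩ hθθ₀) 1).trans hz
    _ = α := measureReal_pValue_le hb0 hb1 hq0 hq1 hθ hα0 hα1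

end Tulap

open Tulap

theorem stmt_15 (n : ℕ) (ε δ : ℝ) (hε : 0 < ε) (hδ : 0 ≤ δ)
    (b q : ℝ) (hb : b = Real.exp (-ε)) (hq : q = 2 * δ * b / (1 - b + 2 * δ * b))
    (θ₀ : ℝ) (hθ₀0 : 0 < θ₀) (hθ₀1 : θ₀ < 1)
    (F₀ FN : ℝ → ℝ)
    (hF₀ : ∀ x : ℝ, F₀ x = ∑' l : ℤ,
      ((1 - b) / (1 + b)) * b ^ l.natAbs * max 0 (min 1 (x - l + 1 / 2)))
    (hFN : ∀ x : ℝ, FN x = max 0 (min 1 ((F₀ x - q / 2) / (1 - q))))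
    (dens : ℝ → ℝ → ℝ)
    (hdens : ∀ (θ : ℝ) (z : ℝ), dens θ z = ∑ x ∈ Finset.range (n + 1),
      ((n.choose x : ℝ) * θ ^ x * (1 - θ) ^ (n - x)) *
        (if q / 2 ≤ F₀ (z - (x : ℝ)) ∧ F₀ (z - (x : ℝ)) ≤ 1 - q / 2 then
          ((1 - b) / (1 + b)) * b ^ (round (z - (x : ℝ))).natAbs / (1 - q) else 0))
    (P : ℝ → Measure ℝ)
    (hP : ∀ θ : ℝ, P θ = volume.withDensity (fun z => ENNReal.ofReal (dens θ z)))
    (FZ : ℝ → ℝ)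
    (hFZ : ∀ z : ℝ, FZ z = ∑ x ∈ Finset.range (n + 1),
      ((n.choose x : ℝ) * θ₀ ^ x * (1 - θ₀) ^ (n - x)) * FN (z - (x : ℝ))) :
    (∀ α : ℝ, 0 ≤ α → α ≤ 1 → (P θ₀ {z | 1 - FZ z ≤ α}).toReal = α) ∧
    (∀ θ : ℝ, 0 < θ → θ ≤ θ₀ → ∀ α : ℝ, 0 ≤ α → α ≤ 1 →
      (P θ {z | 1 - FZ z ≤ α}).toReal ≤ α) := by
  have hb0 : 0 ≤ b := hb ▸ (Real.exp_pos _).le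
  have hb1 : b < 1 := hb ▸ Real.exp_lt_one_iff.2 (neg_lt_zero.2 hε)
  have hδb : 0 ≤ 2 * δ * b := mul_nonneg (mul_nonneg zero_le_two hδ) hb0
  have hq0 : 0 ≤ q := hq ▸ div_nonneg hδb (by linarith)
  have hq1 : q < 1 := by
    rw [hq, div_lt_one (by linarith)]
    linarith
  obtain rfl : F₀ = unifDLapCdf b := funext hF₀
  obtain rfl : FN = tulapCdf b q := funext hFN
  obtain rfl : dens = binomTulapDensity n b q := funext₂ hdens
  obtain rfl : P = binomTulapMeasure n b q := funext hP
  obtain rfl : FZ = binomTulapCdf n b q θ₀ := funext hFZ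
  exact ⟨fun α hα0 hα1 => measureReal_pValue_le hb0 hb1 hq0 hq1 ⟨hθ₀0.le, hθ₀1.le⟩ hα0 hα1,
    fun θ hθ0 hθθ₀ α hα0 hα1 =>
      measureReal_pValue_le_of_le hb0 hb1 hq0 hq1 hθ0.le hθθ₀ hθ₀1.le hα0 hα1⟩
end
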